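/- arXiv:1410.2941 — 2 statements merged into one kernel-verified Lean document; each statement's English description precedes it below -/
import Mathlib

section
/- Let G be a graph (simple, connected, locally finite, with edges of arbitrary lengths), L(G) its line graph, and h : L(G) → G the canonical map. Then h is an (l_max/2)-full (1, 2 l_max)-quasi-isometry, where l_max := sup_{e ∈ E(G)} L(e); that is, d_{L(G)}(x,y) − 2 l_max ≤ d_G(h(x),h(y)) ≤ d_{L(G)}(x,y) for all x,y ∈ L(G), and every point of G is within distance l_max/2 of h(L(G)). -/
open Metric
open scoped ENNReal

noncomputable section

/-- A geodesic arc from `x` to `y` in a metric space `X`: the image of an isometric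
embedding of the interval `[0, dist x y]` sending `0` to `x` and `dist x y` to `y`. -/
def IsGeodesicArc {X : Type} [MetricSpace X] (x y : X) (s : Set X) : Prop :=
  ∃ γ : ℝ → X, γ 0 = x ∧ γ (dist x y) = y ∧
    (∀ a ∈ Set.Icc (0 : ℝ) (dist x y), ∀ b ∈ Set.Icc (0 : ℝ) (dist x y),
      dist (γ a) (γ b) = |a - b|) ∧
    s = γ '' Set.Icc (0 : ℝ) (dist x y)

/-- A geodesic triangle with vertices `x, y, z` and sides `s₁ = [xy]`, `s₂ = [yz]`,
`s₃ = [zx]`. -/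
def IsGeodTriangle {X : Type} [MetricSpace X] (x y z : X) (s₁ s₂ s₃ : Set X) : Prop :=
  IsGeodesicArc x y s₁ ∧ IsGeodesicArc y z s₂ ∧ IsGeodesicArc z x s₃

/-- The sharp constant for thinness of the side `s` with respect to the set `t`
(the union of the other sides): the supremum over points of `s` of the distance to `t`. -/
def sideThin {X : Type} [MetricSpace X] (s t : Set X) : ℝ≥0∞ :=
  ⨆ p ∈ s, ENNReal.ofReal (infDist p t)

/-- The sharp thin constant `δ(T)` of a triangle (or trilateral) with sides
`s₁ s₂ s₃`: a triangle is `δ`-thin iff `triThin s₁ s₂ s₃ ≤ δ`. -/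
def triThin {X : Type} [MetricSpace X] (s₁ s₂ s₃ : Set X) : ℝ≥0∞ :=
  max (sideThin s₁ (s₂ ∪ s₃)) (max (sideThin s₂ (s₃ ∪ s₁)) (sideThin s₃ (s₁ ∪ s₂)))

/-- The hyperbolicity constant `δ(X)` of a metric space:
`δ(X) = sup { δ(T) : T is a geodesic triangle in X }` (with value in `[0,∞]`). -/
def hypConst (X : Type) [MetricSpace X] : ℝ≥0∞ :=
  ⨆ (x : X) (y : X) (z : X) (s₁ : Set X) (s₂ : Set X) (s₃ : Set X)
    (_ : IsGeodTriangle x y z s₁ s₂ s₃), triThin s₁ s₂ s₃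

/-- A simple closed curve in a metric space: an injective continuous image of a circle. -/
def IsSimpleClosedCurve {X : Type} [MetricSpace X] (s : Set X) : Prop :=
  ∃ f : AddCircle (1 : ℝ) → X, Continuous f ∧ Function.Injective f ∧ Set.range f = s

/-- A simple, connected, locally finite graph with edges of arbitrary (positive) lengths,
regarded as a geodesic metric space `X`: each edge `[u,v]` of length `ℓ s(u,v)` is
identified with the real interval `[0, ℓ s(u,v)]` via the parametrization `param u v`,
and the distance is the shortest-path distance. -/
structure MetricGraph where
  /-- the vertices -/
  V : Type
  /-- the (simple) graph structure -/
  G : SimpleGraph V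
  conn : G.Connected
  locFin : ∀ v : V, (G.neighborSet v).Finite
  /-- the length of each edge -/
  ℓ : Sym2 V → ℝ
  ℓ_pos : ∀ e ∈ G.edgeSet, 0 < ℓ e
  /-- the set of points of the graph, as a metric space -/
  X : Type
  [mX : MetricSpace X]
  /-- the inclusion of the vertices among the points -/
  ι : V → X
  ι_inj : Function.Injective ι
  /-- the arclength parametrization of each edge by `[0, ℓ s(u,v)]` -/
  param : ∀ u v : V, G.Adj u v → ℝ → X
  param_zero : ∀ (u v : V) (h : G.Adj u v), param u v h 0 = ι u
  param_symm : ∀ (u v : V) (h : G.Adj u v) (t : ℝ),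
    param v u h.symm t = param u v h (ℓ s(u, v) - t)
  param_injOn : ∀ (u v : V) (h : G.Adj u v),
    Set.InjOn (param u v h) (Set.Icc 0 (ℓ s(u, v)))
  /-- every point of the graph lies on some edge -/
  cover : ∀ x : X, ∃ (u v : V) (h : G.Adj u v),
    ∃ t ∈ Set.Icc (0 : ℝ) (ℓ s(u, v)), x = param u v h t
  /-- the distance between vertices is the shortest-path distance -/
  dist_vertex : ∀ u v : V,
    dist (ι u) (ι v) = sInf { L : ℝ | ∃ w : G.Walk u v, L = (w.edges.map ℓ).sum }
  /-- the distance from an interior point of an edge to any other point is realized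
  either within the edge or through one of the two endpoints of the edge -/
  dist_eq : ∀ (u v : V) (h : G.Adj u v), ∀ t ∈ Set.Icc (0 : ℝ) (ℓ s(u, v)), ∀ y : X,
    dist (param u v h t) y =
      sInf ({ t + dist (ι u) y, (ℓ s(u, v) - t) + dist (ι v) y } ∪
            { d : ℝ | ∃ r ∈ Set.Icc (0 : ℝ) (ℓ s(u, v)), y = param u v h r ∧ d = |t - r| })
  /-- the space of points is a geodesic metric space -/
  geodesic : ∀ x y : X, ∃ s : Set X, IsGeodesicArc x y s

attribute [instance] MetricGraph.mX

namespace MetricGraph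

variable (M : MetricGraph)

/-- The set of points of an edge of the graph. -/
def edgePoints {u v : M.V} (h : M.G.Adj u v) : Set M.X :=
  M.param u v h '' Set.Icc 0 (M.ℓ s(u, v))

/-- The midpoint `Pm(e)` of an edge. -/
def midpt {u v : M.V} (h : M.G.Adj u v) : M.X :=
  M.param u v h (M.ℓ s(u, v) / 2)

/-- `PMV(G)`: the set of points which are vertices or midpoints of edges. -/
def PMV : Set M.X :=
  Set.range M.ι ∪ { x | ∃ (u v : M.V) (h : M.G.Adj u v), x = M.midpt h }

/-- `l_max = sup_{e ∈ E(G)} L(e)` (with value in `[0,∞]`). -/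
def lmax : ℝ≥0∞ :=
  ⨆ e : M.G.edgeSet, ENNReal.ofReal (M.ℓ e.1)

/-- A cycle graph: a (finite) connected graph in which every vertex has degree 2.
(Connectedness is part of the `MetricGraph` structure.) -/
def IsCycleGraph : Prop :=
  Finite M.V ∧ ∀ v : M.V, (M.G.neighborSet v).ncard = 2

end MetricGraph

/-- The line graph `L(G)` of a metric graph `G`: its vertices correspond to the edges
of `G`, two of them being adjacent when the corresponding edges of `G` share a vertex;
the edge `[V_{e_i}, V_{e_j}]` of `L(G)` has length `(L(e_i) + L(e_j))/2`. -/
structure LineGraphOf (M : MetricGraph) where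
  /-- the line graph, as a metric graph -/
  L : MetricGraph
  /-- the vertices of `L(G)` correspond to the edges of `G` -/
  vEquiv : L.V ≃ M.G.edgeSet
  adj_iff : ∀ a b : L.V, L.G.Adj a b ↔
    (a ≠ b ∧ ∃ v : M.V, v ∈ (vEquiv a : Sym2 M.V) ∧ v ∈ (vEquiv b : Sym2 M.V))
  len_eq : ∀ a b : L.V, L.G.Adj a b →
    L.ℓ s(a, b) = (M.ℓ (vEquiv a : Sym2 M.V) + M.ℓ (vEquiv b : Sym2 M.V)) / 2

/-- The set `PM_LV(L(G))`: points of `L(G)` which are vertices or points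
`Pm_L([V_{e_i},V_{e_j}])`, i.e. the point of the edge `[V_{e_i},V_{e_j}]` at distance
`L(e_i)/2` from `V_{e_i}`. -/
def lineGraphPMLV (M : MetricGraph) (LG : LineGraphOf M) : Set LG.L.X :=
  Set.range LG.L.ι ∪
    { x | ∃ (a b : LG.L.V) (hab : LG.L.G.Adj a b),
        x = LG.L.param a b hab (M.ℓ (LG.vEquiv a : Sym2 M.V) / 2) }

/-- The canonical map `h : L(G) → G`.  It sends the vertex `V_e` to the midpoint `Pm(e)`
of `e`, the point `Pm_L([V_{e_i},V_{e_j}])` to the common vertex `e_i ∩ e_j`, and maps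
each half-edge of `L(G)` isometrically onto the corresponding half-edge of `G`:
if `e_a = s(u,w)` and `w` is the common vertex of `e_a` and `e_b`, then the point of the
edge `[V_{e_a},V_{e_b}]` at distance `t ∈ [0, L(e_a)/2]` from `V_{e_a}` is sent to the
point of `e_a` at distance `L(e_a)/2 + t` from `u`. -/
structure CanonicalMap (M : MetricGraph) (LG : LineGraphOf M) where
  /-- the underlying map on points -/
  h : LG.L.X → M.X
  h_halfEdge : ∀ (a b : LG.L.V) (hab : LG.L.G.Adj a b) (u w : M.V) (huw : M.G.Adj u w),
    (LG.vEquiv a : Sym2 M.V) = s(u, w) → w ∈ (LG.vEquiv b : Sym2 M.V) →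
    ∀ t ∈ Set.Icc (0 : ℝ) (M.ℓ (LG.vEquiv a : Sym2 M.V) / 2),
      h (LG.L.param a b hab t) =
        M.param u w huw (M.ℓ (LG.vEquiv a : Sym2 M.V) / 2 + t)

end

/-
The canonical map sends each half of an edge `[V_{e_i}, V_{e_j}]` of `L(G)` isometrically onto
a half of `e_i`, so it is `1`-Lipschitz on every edge of `L(G)`, hence `1`-Lipschitz, since
distances in a metric graph are infima of lengths of paths through edges.  Conversely, every
`x ∈ L(G)` lies within `t` of a vertex `V_e` while `h(x)` lies within `L(e)/2 - t` of an endpoint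
`w` of `e`; two vertices `V_e, V_{e'}` are at distance at most `L(e)/2 + L(e')/2 + d_G(w, w')`
(follow a shortest path of `G` from `w ∈ e` to `w' ∈ e'` through the line graph), and the
triangle inequality gives `d_{L(G)}(x, y) ≤ d_G(h(x), h(y)) + L(e) + L(e')`.  Finally the vertex
`V_e` is sent to the midpoint of `e`, which is within `L(e)/2` of every point of `e`.
-/

open Set

theorem LipschitzOnWith.Icc_union_Icc {Y : Type*} [PseudoMetricSpace Y] {f : ℝ → Y} {K : NNReal}
    {a m b : ℝ} (h₁ : LipschitzOnWith K f (Icc a m)) (h₂ : LipschitzOnWith K f (Icc m b)) :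
    LipschitzOnWith K f (Icc a b) := by
  have key : ∀ x ∈ Icc a b, ∀ y ∈ Icc a b, x ≤ y → dist (f x) (f y) ≤ K * dist x y := by
    intro x hx y hy hxy
    rcases le_total y m with hym | hmy
    · exact h₁.dist_le_mul x ⟨hx.1, hxy.trans hym⟩ y ⟨hy.1, hym⟩
    rcases le_total m x with hmx | hxm
    · exact h₂.dist_le_mul x ⟨hmx, hx.2⟩ y ⟨hmy, hy.2⟩
    calc dist (f x) (f y) ≤ dist (f x) (f m) + dist (f m) (f y) := dist_triangle _ _ _
      _ ≤ K * dist x m + K * dist m y :=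
        add_le_add (h₁.dist_le_mul x ⟨hx.1, hxm⟩ m ⟨hx.1.trans hxm, le_rfl⟩)
          (h₂.dist_le_mul m ⟨le_rfl, hmy.trans hy.2⟩ y ⟨hmy, hy.2⟩)
      _ = K * dist x y := by
        rw [Real.dist_eq, Real.dist_eq, Real.dist_eq, abs_of_nonpos (by linarith),
          abs_of_nonpos (by linarith), abs_of_nonpos (by linarith)]
        ring
  refine LipschitzOnWith.of_dist_le_mul fun x hx y hy => ?_
  rcases le_total x y with hxy | hyx
  · exact key x hx y hy hxy
  · rw [dist_comm, dist_comm x]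
    exact key y hy x hx hyx

namespace MetricGraph

variable (M : MetricGraph) {u v : M.V}

lemma ℓ_pos_of_adj (h : M.G.Adj u v) : 0 < M.ℓ s(u, v) :=
  M.ℓ_pos _ (M.G.mem_edgeSet.mpr h)

lemma ℓ_swap (u v : M.V) : M.ℓ s(v, u) = M.ℓ s(u, v) := by
  rw [Sym2.eq_swap]

lemma param_ℓ (h : M.G.Adj u v) : M.param u v h (M.ℓ s(u, v)) = M.ι v := by
  simpa [M.param_zero] using (M.param_symm u v h 0).symm

lemma param_eq_param_symm (h : M.G.Adj u v) (t : ℝ) :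
    M.param u v h t = M.param v u h.symm (M.ℓ s(u, v) - t) := by
  rw [M.param_symm u v h, sub_sub_cancel]

lemma dist_param_le (h : M.G.Adj u v) {s t : ℝ} (hs : s ∈ Icc 0 (M.ℓ s(u, v)))
    (ht : t ∈ Icc 0 (M.ℓ s(u, v))) : dist (M.param u v h s) (M.param u v h t) ≤ |s - t| := by
  rw [M.dist_eq u v h s hs]
  refine csInf_le ⟨0, ?_⟩ (Or.inr ⟨t, ht, rfl, rfl⟩)
  rintro d ((rfl | rfl) | ⟨r, -, -, rfl⟩)
  · exact add_nonneg hs.1 dist_nonneg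
  · exact add_nonneg (sub_nonneg.2 hs.2) dist_nonneg
  · exact abs_nonneg _

lemma lipschitzOnWith_param (h : M.G.Adj u v) :
    LipschitzOnWith 1 (M.param u v h) (Icc 0 (M.ℓ s(u, v))) :=
  LipschitzOnWith.mk_one fun s hs t ht => (M.dist_param_le h hs ht).trans_eq (Real.dist_eq s t).symm

lemma le_dist_param (h : M.G.Adj u v) {t c : ℝ} (ht : t ∈ Icc 0 (M.ℓ s(u, v))) (y : M.X)
    (hu : c ≤ t + dist (M.ι u) y) (hv : c ≤ M.ℓ s(u, v) - t + dist (M.ι v) y)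
    (hedge : ∀ r ∈ Icc 0 (M.ℓ s(u, v)), y = M.param u v h r → c ≤ |t - r|) :
    c ≤ dist (M.param u v h t) y := by
  rw [M.dist_eq u v h t ht y]
  refine le_csInf ⟨_, Or.inl (mem_insert _ _)⟩ ?_
  rintro d ((rfl | rfl) | ⟨r, hr, hy, rfl⟩)
  exacts [hu, hv, hedge r hr hy]

lemma le_dist_ι {c : ℝ} (hc : ∀ w : M.G.Walk u v, c ≤ (w.edges.map M.ℓ).sum) :
    c ≤ dist (M.ι u) (M.ι v) := by
  rw [M.dist_vertex]
  obtain ⟨w⟩ := M.conn.preconnected u v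
  exact le_csInf ⟨_, w, rfl⟩ (by rintro _ ⟨w, rfl⟩; exact hc w)

section Lipschitz

variable {Y : Type*} [PseudoMetricSpace Y] {f : M.X → Y}

lemma dist_map_param_le {h : M.G.Adj u v}
    (hf : LipschitzOnWith 1 (f ∘ M.param u v h) (Icc 0 (M.ℓ s(u, v)))) {s t : ℝ}
    (hs : s ∈ Icc 0 (M.ℓ s(u, v))) (ht : t ∈ Icc 0 (M.ℓ s(u, v))) :
    dist (f (M.param u v h s)) (f (M.param u v h t)) ≤ |s - t| := by
  simpa [Real.dist_eq] using hf.dist_le_mul s hs t ht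

lemma dist_map_ι_le_ℓ {h : M.G.Adj u v}
    (hf : LipschitzOnWith 1 (f ∘ M.param u v h) (Icc 0 (M.ℓ s(u, v)))) :
    dist (f (M.ι u)) (f (M.ι v)) ≤ M.ℓ s(u, v) := by
  have hℓ := (M.ℓ_pos_of_adj h).le
  simpa [M.param_zero, M.param_ℓ, abs_of_nonneg hℓ] using
    M.dist_map_param_le hf (left_mem_Icc.2 hℓ) (right_mem_Icc.2 hℓ)

lemma dist_map_ι_le_walk
    (hf : ∀ u v (h : M.G.Adj u v), LipschitzOnWith 1 (f ∘ M.param u v h) (Icc 0 (M.ℓ s(u, v))))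
    (w : M.G.Walk u v) : dist (f (M.ι u)) (f (M.ι v)) ≤ (w.edges.map M.ℓ).sum := by
  induction w with
  | nil => simp
  | @cons u u' v h w ih =>
    rw [SimpleGraph.Walk.edges_cons, List.map_cons, List.sum_cons]
    exact (dist_triangle _ (f (M.ι u')) _).trans
      (add_le_add (M.dist_map_ι_le_ℓ (hf u u' h)) ih)

lemma dist_map_le_of_forall_ι
    (hf : ∀ u v (h : M.G.Adj u v), LipschitzOnWith 1 (f ∘ M.param u v h) (Icc 0 (M.ℓ s(u, v))))
    {y : M.X} (hy : ∀ v, dist (f (M.ι v)) (f y) ≤ dist (M.ι v) y) (x : M.X) :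
    dist (f x) (f y) ≤ dist x y := by
  obtain ⟨u, v, h, t, ht, rfl⟩ := M.cover x
  have hℓ := (M.ℓ_pos_of_adj h).le
  apply M.le_dist_param h ht y
  · have hu := M.dist_map_param_le (hf u v h) ht (left_mem_Icc.2 hℓ)
    rw [M.param_zero, sub_zero, abs_of_nonneg ht.1] at hu
    linarith [dist_triangle (f (M.param u v h t)) (f (M.ι u)) (f y), hy u]
  · have hv := M.dist_map_param_le (hf u v h) ht (right_mem_Icc.2 hℓ)
    rw [M.param_ℓ, abs_sub_comm, abs_of_nonneg (sub_nonneg.2 ht.2)] at hv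
    linarith [dist_triangle (f (M.param u v h t)) (f (M.ι v)) (f y), hy v]
  · rintro r hr rfl
    exact M.dist_map_param_le (hf u v h) ht hr

theorem lipschitzWith_one_of_edges
    (hf : ∀ u v (h : M.G.Adj u v), LipschitzOnWith 1 (f ∘ M.param u v h) (Icc 0 (M.ℓ s(u, v)))) :
    LipschitzWith 1 f := by
  have to_vertex (v : M.V) (x : M.X) : dist (f x) (f (M.ι v)) ≤ dist x (M.ι v) :=
    M.dist_map_le_of_forall_ι hf (fun u => M.le_dist_ι (M.dist_map_ι_le_walk hf)) x
  refine LipschitzWith.mk_one fun x y => M.dist_map_le_of_forall_ι hf (fun v => ?_) x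
  rw [dist_comm, dist_comm (M.ι v)]
  exact to_vertex v y

end Lipschitz

lemma ofReal_ℓ_le_lmax {e : Sym2 M.V} (he : e ∈ M.G.edgeSet) : ENNReal.ofReal (M.ℓ e) ≤ M.lmax :=
  le_iSup (fun e : M.G.edgeSet => ENNReal.ofReal (M.ℓ e.1)) ⟨e, he⟩

lemma ℓ_le_toReal_lmax (hM : M.lmax ≠ ⊤) {e : Sym2 M.V} (he : e ∈ M.G.edgeSet) :
    M.ℓ e ≤ M.lmax.toReal :=
  (ENNReal.ofReal_le_iff_le_toReal hM).1 (M.ofReal_ℓ_le_lmax he)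

lemma midpt_symm (h : M.G.Adj u v) : M.midpt h.symm = M.midpt h := by
  rw [midpt, midpt, M.param_symm u v h, ℓ_swap]
  congr 1
  ring

lemma midpt_eq_of_sym2_eq {u' v' : M.V} (h : M.G.Adj u v) (h' : M.G.Adj u' v')
    (he : s(u, v) = s(u', v')) : M.midpt h = M.midpt h' := by
  rcases Sym2.eq_iff.1 he with ⟨rfl, rfl⟩ | ⟨rfl, rfl⟩
  · rfl
  · exact M.midpt_symm h'

lemma dist_midpt_le (h : M.G.Adj u v) {z : M.X} (hz : z ∈ M.edgePoints h) :
    dist (M.midpt h) z ≤ M.ℓ s(u, v) / 2 := by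
  obtain ⟨t, ht, rfl⟩ := hz
  have hℓ := M.ℓ_pos_of_adj h
  calc dist (M.midpt h) (M.param u v h t) ≤ |M.ℓ s(u, v) / 2 - t| :=
        M.dist_param_le h ⟨by linarith, by linarith⟩ ht
    _ ≤ M.ℓ s(u, v) / 2 := abs_le.2 ⟨by linarith [ht.2], by linarith [ht.1]⟩

end MetricGraph

namespace LineGraphOf

variable {M : MetricGraph} (LG : LineGraphOf M)

abbrev edge (a : LG.L.V) : Sym2 M.V := LG.vEquiv a

lemma edge_mem_edgeSet (a : LG.L.V) : LG.edge a ∈ M.G.edgeSet := (LG.vEquiv a).2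

lemma ℓ_edge_pos (a : LG.L.V) : 0 < M.ℓ (LG.edge a) := M.ℓ_pos _ (LG.edge_mem_edgeSet a)

lemma edge_vEquiv_symm {u v : M.V} (h : M.G.Adj u v) :
    LG.edge (LG.vEquiv.symm ⟨s(u, v), M.G.mem_edgeSet.2 h⟩) = s(u, v) :=
  congrArg Subtype.val (LG.vEquiv.apply_symm_apply _)

lemma exists_common_vertex {a b : LG.L.V} (hab : LG.L.G.Adj a b) :
    ∃ (u w : M.V) (_ : M.G.Adj u w), LG.edge a = s(u, w) ∧ w ∈ LG.edge b := by
  obtain ⟨-, w, hwa, hwb⟩ := (LG.adj_iff a b).1 hab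
  obtain ⟨u, hu⟩ := Sym2.mem_iff_exists.1 hwa
  have hea : LG.edge a = s(u, w) := hu.trans Sym2.eq_swap
  exact ⟨u, w, M.G.mem_edgeSet.1 (hea ▸ LG.edge_mem_edgeSet a), hea, hwb⟩

lemma exists_adj (a : LG.L.V) : ∃ b, LG.L.G.Adj a b := by
  obtain ⟨u, v, h, -⟩ := LG.L.cover (LG.L.ι a)
  obtain ⟨w⟩ := LG.L.conn.preconnected a u
  cases w with
  | nil => exact ⟨v, h⟩
  | cons h' _ => exact ⟨_, h'⟩

lemma exists_eq_param_le_half (x : LG.L.X) : ∃ (a b : LG.L.V) (hab : LG.L.G.Adj a b) (t : ℝ),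
    t ∈ Icc 0 (M.ℓ (LG.edge a) / 2) ∧ x = LG.L.param a b hab t := by
  obtain ⟨a, b, hab, t, ht, rfl⟩ := LG.L.cover x
  have hℓ := LG.len_eq a b hab
  rcases le_total t (M.ℓ (LG.edge a) / 2) with hta | hta
  · exact ⟨a, b, hab, t, ⟨ht.1, hta⟩, rfl⟩
  · refine ⟨b, a, hab.symm, LG.L.ℓ s(a, b) - t, ⟨sub_nonneg.2 ht.2, ?_⟩,
      LG.L.param_eq_param_symm hab t⟩
    rw [hℓ]
    exact (sub_le_sub_left hta _).trans_eq (by ring)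

lemma dist_ι_le_of_mem_of_mem {a b : LG.L.V} {p : M.V} (hpa : p ∈ LG.edge a)
    (hpb : p ∈ LG.edge b) :
    dist (LG.L.ι a) (LG.L.ι b) ≤ M.ℓ (LG.edge a) / 2 + M.ℓ (LG.edge b) / 2 := by
  by_cases hab : a = b
  · subst hab
    simp [(LG.ℓ_edge_pos a).le]
  · have hadj := (LG.adj_iff a b).2 ⟨hab, p, hpa, hpb⟩
    calc dist (LG.L.ι a) (LG.L.ι b) ≤ LG.L.ℓ s(a, b) :=
          LG.L.dist_map_ι_le_ℓ (f := id) (LG.L.lipschitzOnWith_param hadj)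
      _ = M.ℓ (LG.edge a) / 2 + M.ℓ (LG.edge b) / 2 := by rw [LG.len_eq a b hadj]; ring

lemma dist_ι_le_walk {p q : M.V} (w : M.G.Walk p q) {a c : LG.L.V} (hpa : p ∈ LG.edge a)
    (hqc : q ∈ LG.edge c) :
    dist (LG.L.ι a) (LG.L.ι c)
      ≤ M.ℓ (LG.edge a) / 2 + M.ℓ (LG.edge c) / 2 + (w.edges.map M.ℓ).sum := by
  induction w generalizing a with
  | nil => simpa using LG.dist_ι_le_of_mem_of_mem hpa hqc
  | @cons p p' q h w ih =>
    set b := LG.vEquiv.symm ⟨s(p, p'), M.G.mem_edgeSet.2 h⟩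
    have hb : LG.edge b = s(p, p') := LG.edge_vEquiv_symm h
    have hab := LG.dist_ι_le_of_mem_of_mem hpa (hb ▸ Sym2.mem_mk_left p p')
    have hbc := ih (hb ▸ Sym2.mem_mk_right p p') hqc
    rw [SimpleGraph.Walk.edges_cons, List.map_cons, List.sum_cons, ← hb]
    linarith [dist_triangle (LG.L.ι a) (LG.L.ι b) (LG.L.ι c)]

lemma dist_ι_le_dist_ι_add {a c : LG.L.V} {p q : M.V} (hpa : p ∈ LG.edge a)
    (hqc : q ∈ LG.edge c) :
    dist (LG.L.ι a) (LG.L.ι c)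
      ≤ M.ℓ (LG.edge a) / 2 + M.ℓ (LG.edge c) / 2 + dist (M.ι p) (M.ι q) := by
  have := M.le_dist_ι (u := p) (v := q)
    (c := dist (LG.L.ι a) (LG.L.ι c) - (M.ℓ (LG.edge a) / 2 + M.ℓ (LG.edge c) / 2))
    fun w => by linarith [LG.dist_ι_le_walk w hpa hqc]
  linarith

end LineGraphOf

namespace CanonicalMap

variable {M : MetricGraph} {LG : LineGraphOf M} (hm : CanonicalMap M LG)

lemma lipschitzOnWith_h_param_of_le_half {a b : LG.L.V} (hab : LG.L.G.Adj a b) :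
    LipschitzOnWith 1 (hm.h ∘ LG.L.param a b hab) (Icc 0 (M.ℓ (LG.edge a) / 2)) := by
  obtain ⟨u, w, huw, hea, hwb⟩ := LG.exists_common_vertex hab
  have hmaps : MapsTo (M.ℓ (LG.edge a) / 2 + ·) (Icc 0 (M.ℓ (LG.edge a) / 2))
      (Icc 0 (M.ℓ s(u, w))) := fun t ht =>
    ⟨by linarith [ht.1, LG.ℓ_edge_pos a], by rw [← hea]; linarith [ht.2]⟩
  refine LipschitzOnWith.mk_one fun s hs t ht => ?_
  simp only [Function.comp_apply, hm.h_halfEdge a b hab u w huw hea hwb s hs,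
    hm.h_halfEdge a b hab u w huw hea hwb t ht, Real.dist_eq]
  calc _ ≤ |M.ℓ (LG.edge a) / 2 + s - (M.ℓ (LG.edge a) / 2 + t)| :=
        M.dist_param_le huw (hmaps hs) (hmaps ht)
    _ = |s - t| := by rw [add_sub_add_left_eq_sub]

lemma lipschitzOnWith_h_param {a b : LG.L.V} (hab : LG.L.G.Adj a b) :
    LipschitzOnWith 1 (hm.h ∘ LG.L.param a b hab) (Icc 0 (LG.L.ℓ s(a, b))) := by
  refine (hm.lipschitzOnWith_h_param_of_le_half hab).Icc_union_Icc ?_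
  have hℓ := LG.len_eq a b hab
  have hsymm : hm.h ∘ LG.L.param a b hab
      = (hm.h ∘ LG.L.param b a hab.symm) ∘ (LG.L.ℓ s(a, b) - ·) := by
    funext t
    simp only [Function.comp_apply, LG.L.param_eq_param_symm hab t]
  have hmaps : MapsTo (LG.L.ℓ s(a, b) - ·) (Icc (M.ℓ (LG.edge a) / 2) (LG.L.ℓ s(a, b)))
      (Icc 0 (M.ℓ (LG.edge b) / 2)) := fun t ht =>
    ⟨sub_nonneg.2 ht.2, by rw [hℓ]; linarith [ht.1]⟩
  rw [hsymm]
  refine LipschitzOnWith.mk_one fun s hs t ht => ?_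
  have := (hm.lipschitzOnWith_h_param_of_le_half hab.symm).dist_le_mul _ (hmaps hs) _ (hmaps ht)
  rwa [NNReal.coe_one, one_mul, Real.dist_eq, sub_sub_sub_cancel_left, ← Real.dist_eq,
    dist_comm t] at this

theorem lipschitzWith_h : LipschitzWith 1 hm.h :=
  LG.L.lipschitzWith_one_of_edges fun _ _ hab => hm.lipschitzOnWith_h_param hab

lemma h_ι_eq_midpt {a : LG.L.V} {u v : M.V} (huv : M.G.Adj u v) (ha : LG.edge a = s(u, v)) :
    hm.h (LG.L.ι a) = M.midpt huv := by
  obtain ⟨b, hab⟩ := LG.exists_adj a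
  obtain ⟨u', w, huw, hea, hwb⟩ := LG.exists_common_vertex hab
  have hℓ : M.ℓ (LG.edge a) = M.ℓ s(u', w) := by rw [hea]
  rw [← LG.L.param_zero a b hab,
    hm.h_halfEdge a b hab u' w huw hea hwb 0 ⟨le_rfl, by linarith [LG.ℓ_edge_pos a]⟩, add_zero,
    hℓ]
  exact M.midpt_eq_of_sym2_eq huw huv (hea.symm.trans ha)

lemma exists_dist_ι_add_dist_h_ι_le (x : LG.L.X) : ∃ (a : LG.L.V) (w : M.V),
    w ∈ LG.edge a ∧ dist x (LG.L.ι a) + dist (hm.h x) (M.ι w) ≤ M.ℓ (LG.edge a) / 2 := by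
  obtain ⟨a, b, hab, t, ht, rfl⟩ := LG.exists_eq_param_le_half x
  obtain ⟨u, w, huw, hea, hwb⟩ := LG.exists_common_vertex hab
  refine ⟨a, w, hea ▸ Sym2.mem_mk_right u w, ?_⟩
  have hℓa := LG.ℓ_edge_pos a
  have hℓL : M.ℓ (LG.edge a) / 2 ≤ LG.L.ℓ s(a, b) := by
    rw [LG.len_eq a b hab]; linarith [LG.ℓ_edge_pos b]
  have hx : dist (LG.L.param a b hab t) (LG.L.ι a) ≤ t := by
    simpa [LG.L.param_zero, abs_of_nonneg ht.1] using
      LG.L.dist_param_le hab ⟨ht.1, ht.2.trans hℓL⟩ (left_mem_Icc.2 (ht.1.trans (ht.2.trans hℓL)))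
  have hhx : dist (hm.h (LG.L.param a b hab t)) (M.ι w) ≤ M.ℓ (LG.edge a) / 2 - t := by
    have hℓ : M.ℓ s(u, w) = M.ℓ (LG.edge a) := by rw [hea]
    rw [hm.h_halfEdge a b hab u w huw hea hwb t ht, ← M.param_ℓ huw]
    calc _ ≤ |M.ℓ (LG.edge a) / 2 + t - M.ℓ s(u, w)| :=
          M.dist_param_le huw ⟨by linarith [ht.1], by linarith [ht.2]⟩
            (right_mem_Icc.2 (M.ℓ_pos_of_adj huw).le)
      _ = M.ℓ (LG.edge a) / 2 - t := by
          rw [hℓ, abs_of_nonpos (by linarith [ht.2])]; ring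
  linarith

lemma dist_le_dist_h_add {lm : ℝ} (hlm : ∀ e ∈ M.G.edgeSet, M.ℓ e ≤ lm) (x y : LG.L.X) :
    dist x y ≤ dist (hm.h x) (hm.h y) + 2 * lm := by
  obtain ⟨a, w, hwa, hx⟩ := hm.exists_dist_ι_add_dist_h_ι_le x
  obtain ⟨c, w', hwc, hy⟩ := hm.exists_dist_ι_add_dist_h_ι_le y
  have hac := LG.dist_ι_le_dist_ι_add hwa hwc
  linarith [dist_triangle4 x (LG.L.ι a) (LG.L.ι c) y,
    dist_triangle4 (M.ι w) (hm.h x) (hm.h y) (M.ι w'), dist_comm (M.ι w) (hm.h x),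
    dist_comm (LG.L.ι c) y, hlm _ (LG.edge_mem_edgeSet a), hlm _ (LG.edge_mem_edgeSet c)]

lemma edist_le_edist_h_add (x y : LG.L.X) :
    edist x y ≤ edist (hm.h x) (hm.h y) + 2 * M.lmax := by
  rcases eq_or_ne M.lmax ⊤ with htop | htop
  · simp [htop]
  rw [edist_dist, edist_dist, ← ENNReal.ofReal_toReal htop, ← ENNReal.ofReal_ofNat 2,
    ← ENNReal.ofReal_mul zero_le_two, ← ENNReal.ofReal_add dist_nonneg (by positivity)]
  exact ENNReal.ofReal_le_ofReal
    (hm.dist_le_dist_h_add (fun e he => M.ℓ_le_toReal_lmax htop he) x y)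

lemma exists_edist_h_le (z : M.X) : ∃ x : LG.L.X, edist (hm.h x) z ≤ M.lmax / 2 := by
  obtain ⟨u, v, huv, t, ht, rfl⟩ := M.cover z
  refine ⟨LG.L.ι (LG.vEquiv.symm ⟨s(u, v), M.G.mem_edgeSet.2 huv⟩), ?_⟩
  rw [hm.h_ι_eq_midpt huv (LG.edge_vEquiv_symm huv), edist_dist]
  calc ENNReal.ofReal (dist (M.midpt huv) (M.param u v huv t))
      ≤ ENNReal.ofReal (M.ℓ s(u, v) / 2) :=
        ENNReal.ofReal_le_ofReal (M.dist_midpt_le huv ⟨t, ht, rfl⟩)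
    _ = ENNReal.ofReal (M.ℓ s(u, v)) / 2 := by
        rw [ENNReal.ofReal_div_of_pos two_pos, ENNReal.ofReal_ofNat]
    _ ≤ M.lmax / 2 := by
        gcongr
        exact M.ofReal_ℓ_le_lmax (M.G.mem_edgeSet.2 huv)

end CanonicalMap

/-- The canonical map `h : L(G) → G` is an `(l_max/2)`-full
`(1, 2 l_max)`-quasi-isometry: `d_{L(G)}(x,y) − 2 l_max ≤ d_G(h(x),h(y)) ≤ d_{L(G)}(x,y)`
for all `x, y`, and every point of `G` is within distance `l_max/2` of the image of `h`. -/
theorem canonicalMap_quasiIsometry (M : MetricGraph) (LG : LineGraphOf M)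
    (hm : CanonicalMap M LG) :
    (∀ x y : LG.L.X, edist x y - 2 * M.lmax ≤ edist (hm.h x) (hm.h y)) ∧
    (∀ x y : LG.L.X, edist (hm.h x) (hm.h y) ≤ edist x y) ∧
    (∀ z : M.X, ∃ x : LG.L.X, edist (hm.h x) z ≤ M.lmax / 2) :=
  ⟨fun x y => tsub_le_iff_right.2 (hm.edist_le_edist_h_add x y),
    fun x y => by simpa using hm.lipschitzWith_h.edist_le_mul x y,
    hm.exists_edist_h_le⟩
end

section
/- In any graph G (simple, connected, locally finite, with edges of arbitrary lengths), the hyperbolicity constant satisfies δ(G) = sup{δ(T) : T is a geodesic triangle in G that is a cycle}. -/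
open Metric
open scoped ENNReal

/-!
The inequality `≥` is immediate. For `≤`, let `p` lie on the side `[xy]` of a geodesic triangle
at positive distance from the union `F` of the two other sides. The maximal subarc `α` of `[xy]`
through `p` whose interior avoids the closed set `F` has distinct endpoints `A, B ∈ F`. If `A` and
`B` lie on a common side, `α` and the subarc of that side from `B` to `A` form a geodesic bigon,
i.e. the degenerate geodesic triangle `{A, B, B}`, and it is a cycle. Otherwise go from `B` along
its side until the other side is first met, at `w`, and then along the other side to `A`: this
closes `α` up to a geodesic triangle `{A, B, w}` which is a cycle. In both cases the new sides lie
in `F`, so `p` is at least as far from them as from `F`.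
-/

open Set Metric Function

/-- `e` is the first point of `K` met on the way from `d` to `m`. -/
theorem IsClosed.exists_mem_uIcc_forall_mem_uIcc_eq {K : Set ℝ} (hK : IsClosed K) (d : ℝ)
    {m : ℝ} (hm : m ∈ K) : ∃ e ∈ K ∩ uIcc d m, ∀ t ∈ K ∩ uIcc d e, t = e := by
  obtain ⟨e, he, hmin⟩ := (isCompact_uIcc.inter_left hK).exists_isMinOn ⟨m, hm, right_mem_uIcc⟩
    (continuous_id.sub continuous_const).abs.continuousOn
  refine ⟨e, he, fun t ⟨htK, hte⟩ => ?_⟩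
  have hle : |e - d| ≤ |t - d| := hmin ⟨htK, uIcc_subset_uIcc_left he.2 hte⟩
  rcases mem_uIcc.1 hte with ⟨h₁, h₂⟩ | ⟨h₁, h₂⟩
  · rw [abs_of_nonneg (by linarith), abs_of_nonneg (by linarith)] at hle; linarith
  · rw [abs_of_nonpos (by linarith), abs_of_nonpos (by linarith)] at hle; linarith

section PathTrans

open unitInterval

variable {X : Type*} [TopologicalSpace X] {x y z : X} {γ : Path x y} {γ' : Path y z}

theorem Path.injOn_trans (hγ : Injective γ) (hγ' : Injective γ') {S : Set I}
    (hS : ∀ s ∈ S, ∀ t ∈ S, (s : ℝ) ≤ 1 / 2 → ¬ (t : ℝ) ≤ 1 / 2 → γ.trans γ' s ≠ γ.trans γ' t) :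
    InjOn (γ.trans γ') S := by
  intro s hs t ht hst
  wlog hst' : (s : ℝ) ≤ t generalizing s t
  · exact (this ht hs hst.symm (le_of_not_ge hst')).symm
  by_cases hmixed : (s : ℝ) ≤ 1 / 2 ∧ ¬ (t : ℝ) ≤ 1 / 2
  · exact absurd hst (hS s hs t ht hmixed.1 hmixed.2)
  rw [trans_apply, trans_apply] at hst
  split_ifs at hst with hs₂ ht₂ ht₂
  · exact Subtype.ext (by simpa using congrArg Subtype.val (hγ hst))
  · exact absurd ⟨hs₂, ht₂⟩ hmixed
  · exact absurd (hst'.trans ht₂) hs₂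
  · exact Subtype.ext (by simpa using congrArg Subtype.val (hγ' hst))

theorem Path.eq_one_and_mem_range_of_trans_eq_trans (hγ' : Injective γ')
    (h : range γ ∩ range γ' ⊆ {z, y}) {s t : I} (hs : (s : ℝ) ≤ 1 / 2) (ht : ¬ (t : ℝ) ≤ 1 / 2)
    (hst : γ.trans γ' s = γ.trans γ' t) : (t : ℝ) = 1 ∧ z ∈ range γ := by
  rw [trans_apply, trans_apply, dif_pos hs, dif_neg ht] at hst
  rcases h ⟨⟨_, hst⟩, ⟨_, rfl⟩⟩ with hz | hy
  · have := congrArg Subtype.val (hγ' (hz.trans γ'.target.symm))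
    simp only [Set.Icc.coe_one] at this
    exact ⟨by linarith, ⟨_, hst.trans hz⟩⟩
  · have := congrArg Subtype.val (hγ' (hy.trans γ'.source.symm))
    simp only [Set.Icc.coe_zero] at this
    exact absurd (by linarith) ht

theorem Path.injective_trans (hγ : Injective γ) (hγ' : Injective γ')
    (h : range γ ∩ range γ' ⊆ {y}) : Injective (γ.trans γ') := by
  refine injOn_univ.1 (injOn_trans hγ hγ' fun s _ t _ hs ht hst => ?_)
  have hz := (eq_one_and_mem_range_of_trans_eq_trans hγ'
    (h.trans (singleton_subset_iff.2 (mem_insert_of_mem _ rfl))) hs ht hst).2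
  have hzy : z = y := h ⟨hz, 1, γ'.target⟩
  simpa using congrArg Subtype.val (hγ' (γ'.target.trans (hzy.trans γ'.source.symm)))

end PathTrans

section SimpleClosedCurve

open unitInterval

variable {X : Type} [MetricSpace X] {x y : X}

theorem Path.isSimpleClosedCurve_range (γ : Path x x) (hγ : InjOn γ {t | (t : ℝ) < 1}) :
    IsSimpleClosedCurve (range γ) := by
  have hIco : ∀ {a : ℝ}, a ∈ Ico 0 1 → a ∈ I := fun ha => ⟨ha.1, ha.2.le⟩
  refine ⟨AddCircle.liftIco 1 0 γ.extend,
    AddCircle.liftIco_zero_continuous (by simp) γ.continuous_extend.continuousOn, ?_, ?_⟩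
  · intro u v huv
    obtain ⟨a, ha, rfl⟩ := AddCircle.eq_coe_Ico u
    obtain ⟨b, hb, rfl⟩ := AddCircle.eq_coe_Ico v
    rw [AddCircle.liftIco_zero_coe_apply ha, AddCircle.liftIco_zero_coe_apply hb,
      γ.extend_apply (hIco ha), γ.extend_apply (hIco hb)] at huv
    exact congrArg _ (congrArg Subtype.val (hγ (show _ < _ from ha.2) (show _ < _ from hb.2) huv))
  · refine Subset.antisymm ?_ fun _ ⟨t, ht⟩ => ?_
    · rintro _ ⟨u, rfl⟩
      obtain ⟨a, ha, rfl⟩ := AddCircle.eq_coe_Ico u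
      rw [AddCircle.liftIco_zero_coe_apply ha, γ.extend_apply (hIco ha)]
      exact mem_range_self _
    rcases t.2.2.lt_or_eq with ht1 | ht1
    · exact ⟨t, by rw [AddCircle.liftIco_zero_coe_apply ⟨t.2.1, ht1⟩, γ.extend_extends', ht]⟩
    · refine ⟨0, ?_⟩
      rw [← QuotientAddGroup.mk_zero, AddCircle.liftIco_zero_coe_apply ⟨le_rfl, one_pos⟩,
        γ.extend_zero, ← ht, show t = 1 from Subtype.ext ht1, γ.target]

theorem Path.isSimpleClosedCurve_range_union {γ : Path x y} {γ' : Path y x} (hγ : Injective γ)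
    (hγ' : Injective γ') (h : range γ ∩ range γ' ⊆ {x, y}) :
    IsSimpleClosedCurve (range γ ∪ range γ') := by
  rw [← trans_range]
  exact (γ.trans γ').isSimpleClosedCurve_range (injOn_trans hγ hγ' fun s _ t ht hs ht₂ hst =>
    (eq_one_and_mem_range_of_trans_eq_trans hγ' h hs ht₂ hst).1.not_lt ht)

end SimpleClosedCurve

section GeodesicArc

open unitInterval

variable {X : Type} [MetricSpace X] {x y z : X} {s s₁ s₂ s₃ : Set X}

theorem continuousOn_of_dist_eq_abs {γ : ℝ → X} {J : Set ℝ}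
    (hγ : ∀ a ∈ J, ∀ b ∈ J, dist (γ a) (γ b) = |a - b|) : ContinuousOn γ J :=
  (LipschitzOnWith.of_dist_le_mul (K := 1) fun a ha b hb => by
    simp [hγ a ha b hb, Real.dist_eq]).continuousOn

theorem IsGeodesicArc.left_mem (h : IsGeodesicArc x y s) : x ∈ s := by
  obtain ⟨γ, h0, -, -, rfl⟩ := h
  exact ⟨0, ⟨le_rfl, dist_nonneg⟩, h0⟩

theorem IsGeodesicArc.right_mem (h : IsGeodesicArc x y s) : y ∈ s := by
  obtain ⟨γ, -, h1, -, rfl⟩ := h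
  exact ⟨dist x y, ⟨dist_nonneg, le_rfl⟩, h1⟩

theorem IsGeodesicArc.isCompact (h : IsGeodesicArc x y s) : IsCompact s := by
  obtain ⟨γ, -, -, hγ, rfl⟩ := h
  exact isCompact_Icc.image_of_continuousOn (continuousOn_of_dist_eq_abs hγ)

theorem IsGeodesicArc.eq_singleton (h : IsGeodesicArc x x s) : s = {x} := by
  obtain ⟨γ, h0, -, -, rfl⟩ := h
  simp [h0]

theorem isGeodesicArc_singleton (x : X) : IsGeodesicArc x x {x} :=
  ⟨fun _ => x, rfl, rfl, fun a ha b hb => by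
    simp only [dist_self, Icc_self, mem_singleton_iff] at ha hb; simp [ha, hb], by simp⟩

theorem IsGeodesicArc.symm (h : IsGeodesicArc x y s) : IsGeodesicArc y x s := by
  obtain ⟨γ, h0, h1, hγ, rfl⟩ := h
  set L := dist x y
  have hmaps : ∀ a ∈ Icc 0 L, L - a ∈ Icc 0 L := fun a ha =>
    ⟨by linarith [ha.2], by linarith [ha.1]⟩
  refine ⟨fun t => γ (L - t), by simpa using h1, by simpa [L, dist_comm y x] using h0,
    fun a ha b hb => ?_, ?_⟩
  · rw [dist_comm y x] at ha hb
    rw [hγ _ (hmaps a ha) _ (hmaps b hb), ← abs_neg]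
    ring_nf
  · rw [dist_comm y x, ← image_image γ (L - ·), image_const_sub_Icc, sub_zero, sub_self]

theorem isGeodesicArc_image_Icc {γ : ℝ → X} {L a b : ℝ}
    (hγ : ∀ a ∈ Icc 0 L, ∀ b ∈ Icc 0 L, dist (γ a) (γ b) = |a - b|)
    (ha : a ∈ Icc 0 L) (hb : b ∈ Icc 0 L) (hab : a ≤ b) :
    IsGeodesicArc (γ a) (γ b) (γ '' Icc a b) := by
  have hd : dist (γ a) (γ b) = b - a := by
    rw [hγ a ha b hb, abs_sub_comm, abs_of_nonneg (by linarith)]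
  have hmaps : ∀ t ∈ Icc 0 (b - a), a + t ∈ Icc 0 L := fun t ht =>
    ⟨by linarith [ha.1, ht.1], by linarith [hb.2, ht.2]⟩
  refine ⟨fun t => γ (a + t), by simp, by simp [hd], fun u hu v hv => ?_, ?_⟩
  · rw [hd] at hu hv
    rw [hγ _ (hmaps u hu) _ (hmaps v hv), add_sub_add_left_eq_sub]
  · rw [hd, ← image_image γ (a + ·), image_const_add_Icc, add_zero, add_sub_cancel]

theorem isGeodesicArc_image_uIcc {γ : ℝ → X} {L a b : ℝ}
    (hγ : ∀ a ∈ Icc 0 L, ∀ b ∈ Icc 0 L, dist (γ a) (γ b) = |a - b|)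
    (ha : a ∈ Icc 0 L) (hb : b ∈ Icc 0 L) :
    IsGeodesicArc (γ a) (γ b) (γ '' uIcc a b) := by
  rcases le_total a b with hab | hba
  · rw [uIcc_of_le hab]; exact isGeodesicArc_image_Icc hγ ha hb hab
  · rw [uIcc_of_ge hba]; exact (isGeodesicArc_image_Icc hγ hb ha hba).symm

theorem IsGeodesicArc.exists_subarc {a b : X} (h : IsGeodesicArc x y s) (ha : a ∈ s)
    (hb : b ∈ s) : ∃ t ⊆ s, IsGeodesicArc a b t := by
  obtain ⟨γ, -, -, hγ, rfl⟩ := h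
  obtain ⟨c, hc, rfl⟩ := ha
  obtain ⟨d, hd, rfl⟩ := hb
  exact ⟨_, image_mono (uIcc_subset_Icc hc hd), isGeodesicArc_image_uIcc hγ hc hd⟩

theorem IsGeodesicArc.exists_subarc_inter_subset {b : X} {C : Set X} (h : IsGeodesicArc x y s)
    (hb : b ∈ s) (hC : IsClosed C) (hsC : (s ∩ C).Nonempty) :
    ∃ w ∈ s ∩ C, ∃ β ⊆ s, IsGeodesicArc b w β ∧ β ∩ C ⊆ {w} := by
  obtain ⟨γ, -, -, hγ, rfl⟩ := h
  obtain ⟨d, hd, rfl⟩ := hb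
  obtain ⟨-, ⟨m, hm, rfl⟩, hmC⟩ := hsC
  have hK : IsClosed (Icc 0 (dist x y) ∩ γ ⁻¹' C) :=
    (continuousOn_of_dist_eq_abs hγ).preimage_isClosed_of_isClosed isClosed_Icc hC
  obtain ⟨e, ⟨⟨he, heC⟩, -⟩, hfirst⟩ := hK.exists_mem_uIcc_forall_mem_uIcc_eq d ⟨hm, hmC⟩
  have hsub : uIcc d e ⊆ Icc 0 (dist x y) := uIcc_subset_Icc hd he
  refine ⟨γ e, ⟨mem_image_of_mem _ he, heC⟩, _, image_mono hsub,
    isGeodesicArc_image_uIcc hγ hd he, ?_⟩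
  rintro _ ⟨⟨t, ht, rfl⟩, htC⟩
  rw [hfirst t ⟨⟨hsub ht, htC⟩, ht⟩, mem_singleton_iff]

theorem IsGeodesicArc.exists_subarc_inter_subset_pair {p : X} {F : Set X}
    (h : IsGeodesicArc x y s) (hF : IsClosed F) (hx : x ∈ F) (hy : y ∈ F) (hp : p ∈ s) :
    ∃ A ∈ F, ∃ B ∈ F, ∃ α ⊆ s, IsGeodesicArc A B α ∧ p ∈ α ∧ α ∩ F ⊆ {A, B} := by
  obtain ⟨γ, h0, h1, hγ, rfl⟩ := h
  set L := dist x y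
  obtain ⟨c, hc, rfl⟩ := hp
  have hK : IsClosed (Icc 0 L ∩ γ ⁻¹' F) :=
    (continuousOn_of_dist_eq_abs hγ).preimage_isClosed_of_isClosed isClosed_Icc hF
  obtain ⟨a, ⟨⟨ha, haF⟩, ha0⟩, ha_first⟩ := hK.exists_mem_uIcc_forall_mem_uIcc_eq c
    (m := 0) ⟨⟨le_rfl, dist_nonneg⟩, by rwa [mem_preimage, h0]⟩
  obtain ⟨b, ⟨⟨hb, hbF⟩, hbL⟩, hb_first⟩ := hK.exists_mem_uIcc_forall_mem_uIcc_eq c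
    (m := L) ⟨⟨dist_nonneg, le_rfl⟩, by rwa [mem_preimage, h1]⟩
  have hac : a ≤ c := (uIcc_of_ge hc.1 ▸ ha0).2
  have hcb : c ≤ b := (uIcc_of_le hc.2 ▸ hbL).1
  refine ⟨γ a, haF, γ b, hbF, γ '' uIcc a b, image_mono (uIcc_subset_Icc ha hb),
    isGeodesicArc_image_uIcc hγ ha hb, ⟨c, mem_uIcc.2 (Or.inl ⟨hac, hcb⟩), rfl⟩, ?_⟩
  rintro _ ⟨⟨t, ht, rfl⟩, htF⟩
  have htK : t ∈ Icc 0 L ∩ γ ⁻¹' F := ⟨uIcc_subset_Icc ha hb ht, htF⟩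
  rw [uIcc_of_le (hac.trans hcb)] at ht
  rcases le_total t c with htc | hct
  · exact Or.inl (by rw [ha_first t ⟨htK, mem_uIcc.2 (Or.inr ⟨ht.1, htc⟩)⟩])
  · exact Or.inr (by rw [hb_first t ⟨htK, mem_uIcc.2 (Or.inl ⟨hct, ht.2⟩)⟩]; rfl)

theorem IsGeodesicArc.exists_path (h : IsGeodesicArc x y s) (hxy : x ≠ y) :
    ∃ γ : Path x y, Injective γ ∧ range γ = s := by
  obtain ⟨γ, h0, h1, hγ, rfl⟩ := h
  set L := dist x y
  have hL : 0 < L := dist_pos.2 hxy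
  have hmaps : MapsTo (L * ·) I (Icc 0 L) := fun t ht =>
    ⟨mul_nonneg hL.le ht.1, mul_le_of_le_one_right hL.le ht.2⟩
  refine ⟨Path.ofLine ((continuousOn_of_dist_eq_abs hγ).comp (by fun_prop) hmaps)
    (by simpa using h0) (by simpa using h1), fun t u htu => ?_, ?_⟩
  · have := hγ _ (hmaps t.2) _ (hmaps u.2)
    simp only [Path.ofLine, Path.coe_mk_mk, comp_apply] at htu
    rw [htu, dist_self, eq_comm, abs_eq_zero, ← mul_sub, mul_eq_zero, sub_eq_zero] at this
    exact Subtype.ext (this.resolve_left hL.ne')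
  · change range ((γ ∘ (L * ·)) ∘ ((↑) : I → ℝ)) = _
    rw [range_comp, Subtype.range_coe, image_comp, image_mul_left_Icc hL.le zero_le_one,
      mul_zero, mul_one]

theorem IsGeodesicArc.isSimpleClosedCurve_union (h₁ : IsGeodesicArc x y s₁)
    (h₂ : IsGeodesicArc y x s₂) (hxy : x ≠ y) (h : s₁ ∩ s₂ ⊆ {x, y}) :
    IsSimpleClosedCurve (s₁ ∪ s₂) := by
  obtain ⟨γ₁, hγ₁, rfl⟩ := h₁.exists_path hxy
  obtain ⟨γ₂, hγ₂, rfl⟩ := h₂.exists_path hxy.symm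
  exact Path.isSimpleClosedCurve_range_union hγ₁ hγ₂ h

theorem IsGeodesicArc.isSimpleClosedCurve_union₃ (h₁ : IsGeodesicArc x y s₁)
    (h₂ : IsGeodesicArc y z s₂) (h₃ : IsGeodesicArc z x s₃) (hxy : x ≠ y) (hyz : y ≠ z)
    (hzx : z ≠ x) (h₁₂ : s₁ ∩ s₂ ⊆ {y}) (h₂₃ : s₂ ∩ s₃ ⊆ {z}) (h₃₁ : s₃ ∩ s₁ ⊆ {x}) :
    IsSimpleClosedCurve (s₁ ∪ s₂ ∪ s₃) := by
  obtain ⟨γ₁, hγ₁, rfl⟩ := h₁.exists_path hxy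
  obtain ⟨γ₂, hγ₂, rfl⟩ := h₂.exists_path hyz
  obtain ⟨γ₃, hγ₃, rfl⟩ := h₃.exists_path hzx
  rw [← Path.trans_range]
  refine Path.isSimpleClosedCurve_range_union (Path.injective_trans hγ₁ hγ₂ h₁₂) hγ₃ ?_
  rw [Path.trans_range, union_inter_distrib_right, inter_comm]
  exact union_subset_union h₃₁ h₂₃

end GeodesicArc

section CycleTriangles

variable {X : Type} [MetricSpace X]

noncomputable def cycleTriangleSup (X : Type) [MetricSpace X] : ℝ≥0∞ :=
  ⨆ (x : X) (y : X) (z : X) (s₁ : Set X) (s₂ : Set X) (s₃ : Set X)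
    (_ : IsGeodTriangle x y z s₁ s₂ s₃ ∧ IsSimpleClosedCurve (s₁ ∪ s₂ ∪ s₃)),
    triThin s₁ s₂ s₃

theorem triThin_le_cycleTriangleSup {x y z : X} {s₁ s₂ s₃ : Set X}
    (h : IsGeodTriangle x y z s₁ s₂ s₃) (hcyc : IsSimpleClosedCurve (s₁ ∪ s₂ ∪ s₃)) :
    triThin s₁ s₂ s₃ ≤ cycleTriangleSup X :=
  le_iSup_of_le x <| le_iSup_of_le y <| le_iSup_of_le z <| le_iSup_of_le s₁ <|
    le_iSup_of_le s₂ <| le_iSup_of_le s₃ <| le_iSup_of_le ⟨h, hcyc⟩ le_rfl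

theorem exists_cycle_triangle_of_bigon {u v A B : X} {S α : Set X} (hS : IsGeodesicArc u v S)
    (hα : IsGeodesicArc A B α) (hAB : A ≠ B) (hA : A ∈ S) (hB : B ∈ S) (hαS : α ∩ S ⊆ {A, B}) :
    ∃ (C : X) (t₂ t₃ : Set X), IsGeodTriangle A B C α t₂ t₃ ∧
      IsSimpleClosedCurve (α ∪ t₂ ∪ t₃) ∧ t₂ ∪ t₃ ⊆ S := by
  obtain ⟨β, hβS, hβ⟩ := hS.exists_subarc hB hA
  refine ⟨B, {B}, β, ⟨hα, isGeodesicArc_singleton B, hβ⟩, ?_,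
    union_subset (singleton_subset_iff.2 hB) hβS⟩
  rw [union_eq_left.2 (singleton_subset_iff.2 hα.right_mem)]
  exact hα.isSimpleClosedCurve_union hβ hAB fun q hq => hαS ⟨hq.1, hβS hq.2⟩

theorem exists_cycle_triangle_of_trigon {u v u' v' A B : X} {S T α : Set X}
    (hS : IsGeodesicArc u v S) (hT : IsGeodesicArc u' v' T) (hα : IsGeodesicArc A B α)
    (hA : A ∈ T) (hAS : A ∉ S) (hB : B ∈ S) (hBT : B ∉ T) (hST : (S ∩ T).Nonempty)
    (hαST : α ∩ (S ∪ T) ⊆ {A, B}) :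
    ∃ (C : X) (t₂ t₃ : Set X), IsGeodTriangle A B C α t₂ t₃ ∧
      IsSimpleClosedCurve (α ∪ t₂ ∪ t₃) ∧ t₂ ∪ t₃ ⊆ S ∪ T := by
  obtain ⟨w, ⟨hwS, hwT⟩, β, hβS, hβ, hβT⟩ :=
    hS.exists_subarc_inter_subset hB hT.isCompact.isClosed hST
  obtain ⟨σ, hσT, hσ⟩ := hT.exists_subarc hwT hA
  have hαβ : α ∩ β ⊆ {B} := fun q hq =>
    (hαST ⟨hq.1, Or.inl (hβS hq.2)⟩).resolve_left fun hqA => hAS (hqA ▸ hβS hq.2)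
  have hσα : σ ∩ α ⊆ {A} := fun q hq =>
    (hαST ⟨hq.2, Or.inr (hσT hq.1)⟩).resolve_right fun hqB => hBT (hqB ▸ hσT hq.1)
  refine ⟨w, β, σ, ⟨hα, hβ, hσ⟩, hα.isSimpleClosedCurve_union₃ hβ hσ (fun h => hAS (h ▸ hB))
    (fun h => hBT (h ▸ hwT)) (fun h => hAS (h ▸ hwS)) hαβ (fun q hq => hβT ⟨hq.1, hσT hq.2⟩) hσα,
    union_subset_union hβS hσT⟩

theorem exists_cycle_triangle_of_mem_union {u v u' v' A B : X} {S T α : Set X}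
    (hS : IsGeodesicArc u v S) (hT : IsGeodesicArc u' v' T) (hST : (S ∩ T).Nonempty)
    (hα : IsGeodesicArc A B α) (hAB : A ≠ B) (hA : A ∈ S ∪ T) (hB : B ∈ S ∪ T)
    (hαST : α ∩ (S ∪ T) ⊆ {A, B}) :
    ∃ (C : X) (t₂ t₃ : Set X), IsGeodTriangle A B C α t₂ t₃ ∧
      IsSimpleClosedCurve (α ∪ t₂ ∪ t₃) ∧ t₂ ∪ t₃ ⊆ S ∪ T := by
  by_cases hABS : A ∈ S ∧ B ∈ S
  · obtain ⟨C, t₂, t₃, hCT, hcyc, hsub⟩ := exists_cycle_triangle_of_bigon hS hα hAB hABS.1 hABS.2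
      ((inter_subset_inter_right _ subset_union_left).trans hαST)
    exact ⟨C, t₂, t₃, hCT, hcyc, hsub.trans subset_union_left⟩
  by_cases hABT : A ∈ T ∧ B ∈ T
  · obtain ⟨C, t₂, t₃, hCT, hcyc, hsub⟩ := exists_cycle_triangle_of_bigon hT hα hAB hABT.1 hABT.2
      ((inter_subset_inter_right _ subset_union_right).trans hαST)
    exact ⟨C, t₂, t₃, hCT, hcyc, hsub.trans subset_union_right⟩
  rcases hA with hAS | hAT
  · have hBT : B ∈ T := hB.resolve_left fun hBS => hABS ⟨hAS, hBS⟩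
    rw [union_comm] at hαST ⊢
    exact exists_cycle_triangle_of_trigon hT hS hα hAS (fun hAT => hABT ⟨hAT, hBT⟩) hBT
      (fun hBS => hABS ⟨hAS, hBS⟩) (inter_comm S T ▸ hST) hαST
  · have hBS : B ∈ S := hB.resolve_right fun hBT => hABT ⟨hAT, hBT⟩
    exact exists_cycle_triangle_of_trigon hS hT hα hAT (fun hAS => hABS ⟨hAS, hBS⟩) hBS
      (fun hBT => hABT ⟨hAT, hBT⟩) hST hαST

theorem exists_cycle_triangle_of_mem_side {x y z p : X} {s₁ s₂ s₃ : Set X}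
    (h : IsGeodTriangle x y z s₁ s₂ s₃) (hp : p ∈ s₁) (hpF : p ∉ s₂ ∪ s₃) :
    ∃ (A B C : X) (t₁ t₂ t₃ : Set X), IsGeodTriangle A B C t₁ t₂ t₃ ∧
      IsSimpleClosedCurve (t₁ ∪ t₂ ∪ t₃) ∧ p ∈ t₁ ∧ t₂ ∪ t₃ ⊆ s₂ ∪ s₃ := by
  obtain ⟨h₁, h₂, h₃⟩ := h
  obtain ⟨A, hA, B, hB, α, -, hα, hpα, hαF⟩ := h₁.exists_subarc_inter_subset_pair
    (h₂.isCompact.union h₃.isCompact).isClosed (Or.inr h₃.right_mem) (Or.inl h₂.left_mem) hp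
  have hAB : A ≠ B := by
    rintro rfl
    rw [hα.eq_singleton, mem_singleton_iff] at hpα
    exact hpF (hpα ▸ hA)
  obtain ⟨C, t₂, t₃, hCT, hcyc, hsub⟩ := exists_cycle_triangle_of_mem_union h₂ h₃
    ⟨z, h₂.right_mem, h₃.left_mem⟩ hα hAB hA hB hαF
  exact ⟨A, B, C, α, t₂, t₃, hCT, hcyc, hpα, hsub⟩

theorem sideThin_le_cycleTriangleSup {x y z : X} {s₁ s₂ s₃ : Set X}
    (h : IsGeodTriangle x y z s₁ s₂ s₃) : sideThin s₁ (s₂ ∪ s₃) ≤ cycleTriangleSup X := by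
  refine iSup₂_le fun p hp => ?_
  by_cases hpF : p ∈ s₂ ∪ s₃
  · simp [infDist_zero_of_mem hpF]
  obtain ⟨A, B, C, t₁, t₂, t₃, hT, hcyc, hpt, hsub⟩ := exists_cycle_triangle_of_mem_side h hp hpF
  calc ENNReal.ofReal (infDist p (s₂ ∪ s₃)) ≤ ENNReal.ofReal (infDist p (t₂ ∪ t₃)) :=
        ENNReal.ofReal_le_ofReal (infDist_le_infDist_of_subset hsub ⟨B, Or.inl hT.2.1.left_mem⟩)
    _ ≤ sideThin t₁ (t₂ ∪ t₃) :=
        le_iSup₂ (f := fun q _ => ENNReal.ofReal (infDist q (t₂ ∪ t₃))) p hpt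
    _ ≤ triThin t₁ t₂ t₃ := le_max_left _ _
    _ ≤ cycleTriangleSup X := triThin_le_cycleTriangleSup hT hcyc

theorem hypConst_eq_cycleTriangleSup (X : Type) [MetricSpace X] :
    hypConst X = cycleTriangleSup X := by
  refine le_antisymm (iSup_le fun x => iSup_le fun y => iSup_le fun z => iSup_le fun s₁ =>
    iSup_le fun s₂ => iSup_le fun s₃ => iSup_le fun ⟨h₁, h₂, h₃⟩ => ?_) ?_
  · exact max_le (sideThin_le_cycleTriangleSup ⟨h₁, h₂, h₃⟩)
      (max_le (sideThin_le_cycleTriangleSup ⟨h₂, h₃, h₁⟩)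
        (sideThin_le_cycleTriangleSup ⟨h₃, h₁, h₂⟩))
  · exact iSup_mono fun x => iSup_mono fun y => iSup_mono fun z => iSup_mono fun s₁ =>
      iSup_mono fun s₂ => iSup_mono fun s₃ => iSup_le fun h => le_iSup_of_le h.1 le_rfl

end CycleTriangles

/-- In any graph `G`, the hyperbolicity constant satisfies
`δ(G) = sup { δ(T) : T is a geodesic triangle in G that is a cycle }`. -/
theorem hypConst_eq_sup_over_cycle_triangles (M : MetricGraph) :
    hypConst M.X =
      ⨆ (x : M.X) (y : M.X) (z : M.X) (s₁ : Set M.X) (s₂ : Set M.X) (s₃ : Set M.X)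
        (_ : IsGeodTriangle x y z s₁ s₂ s₃ ∧ IsSimpleClosedCurve (s₁ ∪ s₂ ∪ s₃)),
        triThin s₁ s₂ s₃ :=
  hypConst_eq_cycleTriangleSup M.X
end
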